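/- Let N ≥ 1, let G = (V, E) be a finite simple undirected graph on vertices {1, …, n}, let M_1, …, M_n ∈ SE(N) be represented as (N+1)×(N+1) homogeneous matrices, and let M ∈ ℝ^{(N+1)n×(N+1)} be their vertical stack. Define L ∈ ℝ^{(N+1)n×(N+1)n} blockwise by: the (i,i)-th (N+1)×(N+1) block is d_i·I_{N+1} with d_i the degree of vertex i, the (i,j)-th block for (i,j) ∈ E is −M_i M_j⁻¹, and all remaining blocks are zero. Then L·M = 0; moreover, if G is connected then the null space of L is exactly (N+1)-dimensional and the columns of M form a basis of it. -/

import Mathlib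

/-!
Let `D = diag(M_1, …, M_n)` blockwise and let `Λ` be the graph Laplacian. Then `L = D (Λ ⊗ I) D⁻¹`
and `M = D S`, where `S` stacks `n` copies of `I`, so `ker L = D · ker (Λ ⊗ I)`. Since `Λ 𝟙 = 0`
we get `L M = 0`; for a connected graph `ker Λ` consists of the constant vectors, whence
`ker (Λ ⊗ I) = range S` and `ker L = range M`. The columns of `M` are independent because `D` is
invertible and `S` is injective as soon as `n ≥ 1`.
-/

open Matrix

noncomputable section

/-- Index type for (N+1)×(N+1) homogeneous matrices. -/
abbrev IdxN (N : ℕ) : Type := Fin N ⊕ Fin 1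

/-- The (N+1)×(N+1) homogeneous matrix `[[R, t],[0,1]]`. -/
def homogN (N : ℕ) (R : Matrix (Fin N) (Fin N) ℝ) (t : Fin N → ℝ) :
    Matrix (IdxN N) (IdxN N) ℝ :=
  Matrix.fromBlocks R (Matrix.of fun i (_ : Fin 1) => t i) 0 1

/-- `A` is an SE(N) element written as an (N+1)×(N+1) homogeneous matrix. -/
def IsSEN (N : ℕ) (A : Matrix (IdxN N) (IdxN N) ℝ) : Prop :=
  ∃ (R : Matrix (Fin N) (Fin N) ℝ) (t : Fin N → ℝ),
    Rᵀ * R = 1 ∧ R.det = 1 ∧ A = homogN N R t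

open scoped Kronecker

namespace Matrix

variable {ι κ R : Type*} [CommRing R]

/-- `Matrix.blockDiagonal` with the block index as the first coordinate, matching the row order
`Fin n × IdxN N` of the stacked matrices. -/
def blockDiagonalFst [DecidableEq ι] (A : ι → Matrix κ κ R) : Matrix (ι × κ) (ι × κ) R :=
  reindex (Equiv.prodComm κ ι) (Equiv.prodComm κ ι) (blockDiagonal A)

@[simp]
lemma blockDiagonalFst_apply [DecidableEq ι] (A : ι → Matrix κ κ R) (i j : ι) (r c : κ) :
    blockDiagonalFst A (i, r) (j, c) = if i = j then A i r c else 0 := by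
  simp [blockDiagonalFst, blockDiagonal_apply]

lemma blockDiagonalFst_one [DecidableEq ι] [DecidableEq κ] :
    blockDiagonalFst (1 : ι → Matrix κ κ R) = 1 := by
  rw [blockDiagonalFst, blockDiagonal_one, reindex_apply, submatrix_one_equiv]

section

variable [Fintype ι] [DecidableEq ι] [Fintype κ]

lemma blockDiagonalFst_mul (A B : ι → Matrix κ κ R) :
    blockDiagonalFst (A * B) = blockDiagonalFst A * blockDiagonalFst B := by
  simp only [blockDiagonalFst, reindex_apply, submatrix_mul_equiv, Pi.mul_def, blockDiagonal_mul]

lemma blockDiagonalFst_mul_blockDiagonalFst_inv [DecidableEq κ] {A : ι → Matrix κ κ R}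
    (hA : ∀ i, IsUnit (A i).det) :
    blockDiagonalFst A * blockDiagonalFst (fun i => (A i)⁻¹) = 1 := by
  rw [← blockDiagonalFst_mul, ← blockDiagonalFst_one]
  exact congrArg _ (funext fun i => mul_nonsing_inv _ (hA i))

lemma blockDiagonalFst_inv_mul_blockDiagonalFst [DecidableEq κ] {A : ι → Matrix κ κ R}
    (hA : ∀ i, IsUnit (A i).det) :
    blockDiagonalFst (fun i => (A i)⁻¹) * blockDiagonalFst A = 1 := by
  rw [← blockDiagonalFst_mul, ← blockDiagonalFst_one]
  exact congrArg _ (funext fun i => nonsing_inv_mul _ (hA i))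

lemma blockDiagonalFst_mul_kronecker_one_mul_apply [DecidableEq κ] (A B : ι → Matrix κ κ R)
    (P : Matrix ι ι R) (i j : ι) (r c : κ) :
    (blockDiagonalFst A * (P ⊗ₖ (1 : Matrix κ κ R)) * blockDiagonalFst B) (i, r) (j, c) =
      P i j * (A i * B j) r c := by
  simp [mul_apply, Fintype.sum_prod_type, one_apply, Finset.mul_sum, mul_comm, mul_left_comm]

end

variable (ι κ R) in
def stackedOne [DecidableEq κ] : Matrix (ι × κ) κ R := of fun p c => (1 : Matrix κ κ R) p.2 c

lemma stackedOne_mulVec [Fintype κ] [DecidableEq κ] (v : κ → R) :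
    stackedOne ι κ R *ᵥ v = fun p => v p.2 := by
  ext p; simp [stackedOne, mulVec, dotProduct, one_apply]

lemma stackedOne_mulVec_injective [Nonempty ι] [Fintype κ] [DecidableEq κ] :
    Function.Injective (stackedOne ι κ R *ᵥ · : (κ → R) → ι × κ → R) := by
  intro v w h
  obtain ⟨i⟩ := ‹Nonempty ι›
  ext r
  simpa [stackedOne_mulVec] using congrFun h (i, r)

lemma blockDiagonalFst_mul_stackedOne [Fintype ι] [DecidableEq ι] [Fintype κ] [DecidableEq κ]
    (A : ι → Matrix κ κ R) (i : ι) (r c : κ) :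
    (blockDiagonalFst A * stackedOne ι κ R) (i, r) c = A i r c := by
  simp [mul_apply, Fintype.sum_prod_type, stackedOne, one_apply]

lemma linearIndependent_col_blockDiagonalFst_mul_stackedOne [Fintype ι] [DecidableEq ι]
    [Nonempty ι] [Fintype κ] [DecidableEq κ] {A : ι → Matrix κ κ R}
    (hA : ∀ i, IsUnit (A i).det) :
    LinearIndependent R (blockDiagonalFst A * stackedOne ι κ R).col := by
  have hD : Function.LeftInverse (blockDiagonalFst fun i => (A i)⁻¹).mulVec
      (blockDiagonalFst A).mulVec := fun x => by
    rw [mulVec_mulVec, blockDiagonalFst_inv_mul_blockDiagonalFst hA, one_mulVec]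
  rw [← mulVec_injective_iff]
  intro x y hxy
  simp only [← mulVec_mulVec] at hxy
  exact stackedOne_mulVec_injective (hD.injective hxy)

lemma kronecker_one_mulVec_apply [Fintype ι] [Fintype κ] [DecidableEq κ] (P : Matrix ι ι R)
    (x : ι × κ → R) (i : ι) (c : κ) :
    ((P ⊗ₖ (1 : Matrix κ κ R)) *ᵥ x) (i, c) = (P *ᵥ fun j => x (j, c)) i := by
  simp [mulVec, dotProduct, Fintype.sum_prod_type, one_apply]

lemma kronecker_one_mulVec_eq_zero_iff [Fintype ι] [Fintype κ] [DecidableEq κ]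
    (P : Matrix ι ι R) (x : ι × κ → R) :
    (P ⊗ₖ (1 : Matrix κ κ R)) *ᵥ x = 0 ↔ ∀ c, P *ᵥ (fun j => x (j, c)) = 0 := by
  constructor
  · intro h c
    ext i
    simpa [kronecker_one_mulVec_apply] using congrFun h (i, c)
  · intro h
    ext ⟨i, c⟩
    rw [kronecker_one_mulVec_apply, h c, Pi.zero_apply, Pi.zero_apply]

lemma kronecker_one_mul_stackedOne [Fintype ι] [Fintype κ] [DecidableEq κ] {P : Matrix ι ι R}
    (hP : P *ᵥ (fun _ => 1) = 0) :
    P ⊗ₖ (1 : Matrix κ κ R) * stackedOne ι κ R = 0 := by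
  ext ⟨i, r⟩ c
  have := congrFun hP i
  simp_all [mul_apply, Fintype.sum_prod_type, stackedOne, one_apply, mulVec, dotProduct]

lemma ker_kronecker_one_mulVecLin [Fintype ι] [Fintype κ] [DecidableEq κ] {P : Matrix ι ι R}
    (hP : ∀ v, P *ᵥ v = 0 → ∃ a, v = fun _ => a) (hP₁ : P *ᵥ (fun _ => 1) = 0) :
    LinearMap.ker (P ⊗ₖ (1 : Matrix κ κ R)).mulVecLin
      = LinearMap.range (stackedOne ι κ R).mulVecLin := by
  refine le_antisymm (fun x hx => ?_) ?_
  · rw [LinearMap.mem_ker, mulVecLin_apply, kronecker_one_mulVec_eq_zero_iff] at hx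
    choose a ha using fun c => hP _ (hx c)
    refine ⟨a, funext fun p => ?_⟩
    rw [mulVecLin_apply, stackedOne_mulVec]
    exact (congrFun (ha p.2) p.1).symm
  · rw [LinearMap.range_le_ker_iff, ← mulVecLin_mul, kronecker_one_mul_stackedOne hP₁,
      mulVecLin_zero]

lemma ker_mulVecLin_conj {n : Type*} [Fintype n] [DecidableEq n] {D D' : Matrix n n R}
    (h : D * D' = 1) (h' : D' * D = 1) (K : Matrix n n R) :
    LinearMap.ker (D * K * D').mulVecLin = (LinearMap.ker K.mulVecLin).map D.mulVecLin := by
  ext x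
  simp only [LinearMap.mem_ker, Submodule.mem_map, mulVecLin_apply]
  constructor
  · intro hx
    refine ⟨D' *ᵥ x, ?_, by rw [mulVec_mulVec, h, one_mulVec]⟩
    have := congrArg (D' *ᵥ ·) hx
    simpa only [mulVec_mulVec, ← mul_assoc, h', one_mul, mulVec_zero] using this
  · rintro ⟨y, hy, rfl⟩
    rw [mulVec_mulVec, mul_assoc, h', mul_one, ← mulVec_mulVec, hy, mulVec_zero]

end Matrix

lemma SimpleGraph.lapMatrix_apply {V R : Type*} [Fintype V] [DecidableEq V] [AddGroupWithOne R]
    (G : SimpleGraph V) [DecidableRel G.Adj] (i j : V) :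
    G.lapMatrix R i j = if i = j then (G.degree i : R) else if G.Adj i j then -1 else 0 := by
  by_cases hij : i = j
  · subst hij; simp [SimpleGraph.lapMatrix, SimpleGraph.degMatrix]
  · by_cases hadj : G.Adj i j <;> simp [SimpleGraph.lapMatrix, SimpleGraph.degMatrix, hij, hadj]

lemma SimpleGraph.Connected.exists_eq_const_of_lapMatrix_mulVec_eq_zero {V : Type*} [Fintype V]
    [DecidableEq V] {G : SimpleGraph V} [DecidableRel G.Adj] (hG : G.Connected) {v : V → ℝ}
    (hv : G.lapMatrix ℝ *ᵥ v = 0) : ∃ a, v = fun _ => a := by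
  obtain ⟨i⟩ := hG.nonempty
  exact ⟨v i, funext fun j =>
    (G.lapMatrix_mulVec_eq_zero_iff_forall_reachable.1 hv) j i (hG.preconnected j i)⟩

lemma IsSEN.det_eq_one {N : ℕ} {A : Matrix (IdxN N) (IdxN N) ℝ} (h : IsSEN N A) :
    A.det = 1 := by
  obtain ⟨R, t, -, hdet, rfl⟩ := h
  rw [homogN, det_fromBlocks_zero₂₁, hdet, det_one, one_mul]

theorem SEN_block_laplacian_general
    (N : ℕ) (n : ℕ) (hn : 1 ≤ n)
    (G : SimpleGraph (Fin n)) [DecidableRel G.Adj]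
    (Ms : Fin n → Matrix (IdxN N) (IdxN N) ℝ) (hMs : ∀ i, IsSEN N (Ms i))
    (M : Matrix (Fin n × IdxN N) (IdxN N) ℝ)
    (hM : ∀ i r c, M (i, r) c = Ms i r c)
    (L : Matrix (Fin n × IdxN N) (Fin n × IdxN N) ℝ)
    (hL : ∀ i r j c, L (i, r) (j, c) =
      if i = j then (G.degree i : ℝ) * (if r = c then 1 else 0)
      else if G.Adj i j then -((Ms i * (Ms j)⁻¹) r c) else 0) :
    L * M = 0 ∧
      (G.Connected →
        LinearMap.ker L.mulVecLin
            = Submodule.span ℝ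
                (Set.range fun c : IdxN N => fun p : Fin n × IdxN N => M p c) ∧
          LinearIndependent ℝ (fun c : IdxN N => fun p : Fin n × IdxN N => M p c) ∧
          Module.finrank ℝ (LinearMap.ker L.mulVecLin) = N + 1) := by
  have hunit : ∀ i, IsUnit (Ms i).det := fun i => (hMs i).det_eq_one ▸ isUnit_one
  set D := blockDiagonalFst Ms
  set D' := blockDiagonalFst fun i => (Ms i)⁻¹
  set K := G.lapMatrix ℝ ⊗ₖ (1 : Matrix (IdxN N) (IdxN N) ℝ)
  set E := stackedOne (Fin n) (IdxN N) ℝ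
  have hL' : L = D * K * D' := by
    ext ⟨i, r⟩ ⟨j, c⟩
    rw [hL, blockDiagonalFst_mul_kronecker_one_mul_apply, SimpleGraph.lapMatrix_apply]
    rcases eq_or_ne i j with rfl | hij
    · simp [mul_nonsing_inv _ (hunit i), one_apply]
    · by_cases hadj : G.Adj i j <;> simp [hij, hadj]
  have hM' : M = D * E := by
    ext ⟨i, r⟩ c
    rw [hM, blockDiagonalFst_mul_stackedOne]
  have hKE : K * E = 0 := kronecker_one_mul_stackedOne G.lapMatrix_mulVec_const_eq_zero
  refine ⟨?_, fun hconn => ?_⟩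
  · rw [hL', hM']
    simp only [Matrix.mul_assoc]
    rw [← Matrix.mul_assoc D', blockDiagonalFst_inv_mul_blockDiagonalFst hunit, Matrix.one_mul,
      hKE, Matrix.mul_zero]
  have hker : LinearMap.ker L.mulVecLin = LinearMap.range M.mulVecLin := by
    rw [hL', ker_mulVecLin_conj (blockDiagonalFst_mul_blockDiagonalFst_inv hunit)
      (blockDiagonalFst_inv_mul_blockDiagonalFst hunit),
      ker_kronecker_one_mulVecLin (fun v => hconn.exists_eq_const_of_lapMatrix_mulVec_eq_zero)
        G.lapMatrix_mulVec_const_eq_zero, ← LinearMap.range_comp, ← mulVecLin_mul, hM']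
  have hli : LinearIndependent ℝ M.col :=
    have : Nonempty (Fin n) := ⟨⟨0, hn⟩⟩
    hM' ▸ linearIndependent_col_blockDiagonalFst_mul_stackedOne hunit
  rw [range_mulVecLin] at hker
  exact ⟨hker, hli, by rw [hker, finrank_span_eq_card hli]; simp⟩

/-- for `M_1, …, M_n ∈ SE(N)` and a finite simple graph `G`, the block
Laplacian `L` (diagonal blocks `deg(i)·I_{N+1}`, blocks `−M_i M_j⁻¹` on edges, zero
elsewhere) satisfies `L·M = 0`; moreover if `G` is connected then the null space of
`L` is exactly (N+1)-dimensional and the columns of `M` form a basis of it. -/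
theorem SEN_block_laplacian
    (N : ℕ) (hN : 1 ≤ N) (n : ℕ) (hn : 1 ≤ n)
    (G : SimpleGraph (Fin n)) [DecidableRel G.Adj]
    (Ms : Fin n → Matrix (IdxN N) (IdxN N) ℝ) (hMs : ∀ i, IsSEN N (Ms i))
    (M : Matrix (Fin n × IdxN N) (IdxN N) ℝ)
    (hM : ∀ i r c, M (i, r) c = Ms i r c)
    (L : Matrix (Fin n × IdxN N) (Fin n × IdxN N) ℝ)
    (hL : ∀ i r j c, L (i, r) (j, c) =
      if i = j then (G.degree i : ℝ) * (if r = c then 1 else 0)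
      else if G.Adj i j then -((Ms i * (Ms j)⁻¹) r c) else 0) :
    L * M = 0 ∧
      (G.Connected →
        LinearMap.ker L.mulVecLin
            = Submodule.span ℝ
                (Set.range fun c : IdxN N => fun p : Fin n × IdxN N => M p c) ∧
          LinearIndependent ℝ (fun c : IdxN N => fun p : Fin n × IdxN N => M p c) ∧
          Module.finrank ℝ (LinearMap.ker L.mulVecLin) = N + 1) :=
  SEN_block_laplacian_general N n hn G Ms hMs M hM L hL
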